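/- Suppose α, β₁,…,β_k are positive reals, Y₁,…,Y_k are subsets of [n], and for every s ∈ [n] the sum of β_i over those i with s ∈ Y_i equals α. Then the linear inequality Σ_{i=1}^k β_i x_{Y_i} ≥ α x_{[n]} (as an inequality on vectors x ∈ ℝ^{2^n−1}) is a nonnegative linear combination of (log-form) uniform cover inequalities, i.e. of inequalities of the form Σ_j x_{Z_j} ≥ m x_{[n]} where Z₁,…,Z_r is an m-uniform cover of [n]. -/

import Mathlib

/-! The balance condition is a system of linear equations with rational coefficients, so a positive
solution `β` is a convex combination of positive rational solutions: in a `ℚ`-basis of the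
`ℚ`-span of the entries of `β`, rational coefficient vectors give rational solutions, and every
point of an open subset of `ℝᵈ` is a convex combination of its rational points. Clearing
denominators, a rational solution becomes a vector `P` of multiplicities with
`∑_{i ∋ s} P i = m` for every `s`, i.e. the `m`-uniform cover listing each `Y i` exactly `P i`
times. -/

open Finset Matrix

theorem IsOpen.subset_convexHull_inter_pi_range_ratCast {ι : Type*} [Fintype ι]
    {U : Set (ι → ℝ)} (hU : IsOpen U) :
    U ⊆ convexHull ℝ (U ∩ Set.univ.pi fun _ => Set.range ((↑) : ℚ → ℝ)) := by
  classical
  suffices key : ∀ T : Finset ι,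
      U ⊆ convexHull ℝ (U ∩ (T : Set ι).pi fun _ => Set.range ((↑) : ℚ → ℝ)) by
    simpa using key univ
  intro T
  induction T using Finset.induction_on with
  | empty => simpa using subset_convexHull ℝ U
  | @insert j T _ ih =>
    -- `y` lies on a segment inside `U` between two points whose `j`-th coordinate is rational.
    refine ih.trans (convexHull_min ?_ (convex_convexHull ℝ _))
    rintro y ⟨hyU, hyT⟩
    have hline : IsOpen ((Function.update y j) ⁻¹' U) :=
      hU.preimage (continuous_const.update j continuous_id)
    obtain ⟨a, b, hab, hsub⟩ := (mem_nhds_iff_exists_Ioo_subset.1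
      (hline.mem_nhds (show y j ∈ _ by simpa using hyU)))
    obtain ⟨u₀, hau₀, hu₀⟩ := exists_rat_btwn hab.1
    obtain ⟨u₁, hu₁, hu₁b⟩ := exists_rat_btwn hab.2
    have hmem : ∀ u : ℚ, (u : ℝ) ∈ Set.Ioo a b →
        Function.update y j (u : ℝ) ∈ convexHull ℝ
          (U ∩ ((insert j T : Finset ι) : Set ι).pi fun _ => Set.range ((↑) : ℚ → ℝ)) := by
      intro u hu
      refine subset_convexHull ℝ _ ⟨hsub hu, fun i hi => ?_⟩
      rcases eq_or_ne i j with rfl | hij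
      · simp
      · simpa [hij] using hyT i (by simpa [hij] using hi)
    obtain ⟨p, q, hp, hq, hpq, hy⟩ : y j ∈ segment ℝ (u₀ : ℝ) u₁ := by
      rw [segment_eq_Icc (hu₀.trans hu₁).le]
      exact ⟨hu₀.le, hu₁.le⟩
    have hcomb : p • Function.update y j (u₀ : ℝ) + q • Function.update y j (u₁ : ℝ) = y := by
      ext i
      rcases eq_or_ne i j with rfl | hij
      · simpa using hy
      · simp only [Pi.add_apply, Pi.smul_apply, Function.update_of_ne hij, smul_eq_mul]
        rw [← add_mul, hpq, one_mul]
    rw [← hcomb]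
    exact convex_convexHull ℝ _ (hmem u₀ ⟨hau₀, hu₀.trans hab.2⟩)
      (hmem u₁ ⟨hab.1.trans hu₁, hu₁b⟩) hp hq hpq

theorem exists_vecMul_ratCast_eq {ι : Type*} [Fintype ι] (γ : ι → ℝ) :
    ∃ (d : ℕ) (e : Fin d → ℝ) (c : Matrix (Fin d) ι ℚ),
      e ᵥ* c.map (↑) = γ ∧ ∀ w : ι → ℚ, γ ⬝ᵥ (fun i => (w i : ℝ)) = 0 → c *ᵥ w = 0 := by
  let V : Submodule ℚ ℝ := Submodule.span ℚ (Set.range γ)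
  have : Module.Finite ℚ V := FiniteDimensional.span_of_finite ℚ (Set.finite_range γ)
  let b := Module.finBasis ℚ V
  let g : ι → V := fun i => ⟨γ i, Submodule.subset_span (Set.mem_range_self i)⟩
  refine ⟨_, fun j => b j, Matrix.of fun j i => b.repr (g i) j, ?_, fun w hw => ?_⟩
  · ext i
    have h := congrArg ((↑) : V → ℝ) (b.sum_repr (g i))
    rw [Submodule.coe_sum] at h
    simp only [vecMul, dotProduct, map_apply, of_apply]
    convert h using 2 with j
    rw [Submodule.coe_smul, Rat.smul_def, mul_comm]
  · have hzero : ∑ i, w i • g i = 0 := by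
      ext
      rw [Submodule.coe_sum, Submodule.coe_zero, ← hw]
      simp only [Submodule.coe_smul, Rat.smul_def, dotProduct]
      exact sum_congr rfl fun i _ => mul_comm _ _
    ext j
    have h := congrArg (fun v => b.repr v j) hzero
    simp only [map_sum, map_smul, Finsupp.coe_finsetSum, Finset.sum_apply, Finsupp.smul_apply,
      smul_eq_mul, map_zero, Finsupp.coe_zero, Pi.zero_apply] at h
    simpa [mulVec, dotProduct, mul_comm] using h

theorem mem_convexHull_ratCast_of_pos {ι : Type*} [Fintype ι] {γ : ι → ℝ} (hγ : ∀ i, 0 < γ i) :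
    γ ∈ convexHull ℝ ((fun q : ι → ℚ => fun i => (q i : ℝ)) ''
      {q | (∀ i, 0 < q i) ∧ ∀ w : ι → ℚ, γ ⬝ᵥ (fun i => (w i : ℝ)) = 0 → q ⬝ᵥ w = 0}) := by
  obtain ⟨d, e, c, rfl, hrel⟩ := exists_vecMul_ratCast_eq γ
  set C : Matrix (Fin d) ι ℝ := c.map (↑)
  have hU : IsOpen {x : Fin d → ℝ | ∀ i, 0 < (x ᵥ* C) i} := by
    simp only [Set.ofPred_forall]
    exact isOpen_iInter_of_finite fun i => isOpen_lt continuous_const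
      ((continuous_apply i).comp (continuous_id.matrix_vecMul continuous_const))
  have he := Set.mem_image_of_mem (vecMulLinear C)
    (hU.subset_convexHull_inter_pi_range_ratCast (show e ∈ _ from hγ))
  rw [LinearMap.image_convexHull] at he
  refine convexHull_mono ?_ he
  rintro _ ⟨x, ⟨hxU, hxrat⟩, rfl⟩
  choose p hp using fun j => hxrat j (Set.mem_univ j)
  obtain rfl : (fun j => (p j : ℝ)) = x := funext hp
  have hcast : ∀ i, ((p ᵥ* c) i : ℝ) = ((fun j => (p j : ℝ)) ᵥ* C) i :=
    (Rat.castHom ℝ).map_vecMul c p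
  refine ⟨p ᵥ* c, ⟨fun i => ?_, fun w hw => ?_⟩, funext hcast⟩
  · exact_mod_cast (hcast i).symm ▸ hxU i
  · rw [← dotProduct_mulVec, hrel w hw, dotProduct_zero]

theorem exists_natCast_eq_mul_of_nonneg {ι : Type*} [Fintype ι] {q : ι → ℚ} (hq : ∀ i, 0 ≤ q i) :
    ∃ D : ℕ, 0 < D ∧ ∃ P : ι → ℕ, ∀ i, (P i : ℚ) = D * q i := by
  refine ⟨∏ i, (q i).den, prod_pos fun i _ => (q i).den_pos, ?_⟩
  have hP : ∀ i, ∃ p : ℕ, (p : ℚ) = (∏ i, (q i).den : ℕ) * q i := by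
    intro i
    obtain ⟨K, hK⟩ := dvd_prod_of_mem (fun i => (q i).den) (mem_univ i)
    refine ⟨K * (q i).num.toNat, ?_⟩
    have hnum : ((q i).num.toNat : ℚ) = (q i).num := by
      exact_mod_cast Int.toNat_of_nonneg (Rat.num_nonneg.2 (hq i))
    rw [hK, Nat.cast_mul, Nat.cast_mul, hnum, ← Rat.mul_den_eq_num]
    ring
  choose P hP using hP
  exact ⟨P, hP⟩

theorem exists_nat_decomposition_of_pos {ι : Type*} [Fintype ι] {β : ι → ℝ}
    (hβ : ∀ i, 0 < β i) :
    ∃ (N : ℕ) (c : Fin N → ℝ) (P : Fin N → ι → ℕ), (∀ t, 0 ≤ c t) ∧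
      β = ∑ t, c t • (fun i => (P t i : ℝ)) ∧
      ∀ w : ι → ℚ, β ⬝ᵥ (fun i => (w i : ℝ)) = 0 → ∀ t, (fun i => (P t i : ℚ)) ⬝ᵥ w = 0 := by
  obtain ⟨κ, _, a, v, ha, -, hv, hβv⟩ :=
    mem_convexHull_iff_exists_fintype.1 (mem_convexHull_ratCast_of_pos hβ)
  choose q hq hqv using hv
  choose D hD P hP using fun k => exists_natCast_eq_mul_of_nonneg fun i => (hq k).1 i |>.le
  let σ := (Fintype.equivFin κ).symm
  refine ⟨Fintype.card κ, fun t => a (σ t) / D (σ t), fun t => P (σ t), fun t => ?_, ?_, ?_⟩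
  · exact div_nonneg (ha _) (Nat.cast_nonneg _)
  · rw [← hβv, ← σ.sum_comp]
    refine sum_congr rfl fun t _ => funext fun i => ?_
    have hPi : (P (σ t) i : ℝ) = D (σ t) * q (σ t) i := by
      exact_mod_cast congrArg ((↑) : ℚ → ℝ) (hP (σ t) i)
    have hD0 : (D (σ t) : ℝ) ≠ 0 := Nat.cast_ne_zero.2 (hD _).ne'
    simp only [Pi.smul_apply, smul_eq_mul, ← hqv, hPi]
    field_simp
  · intro w hw t
    have : (fun i => (P (σ t) i : ℚ)) = (D (σ t) : ℚ) • q (σ t) := funext (hP (σ t))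
    rw [this, smul_dotProduct, (hq _).2 w hw, smul_zero]

def replicateIndex {k : ℕ} (P : Fin k → ℕ) (j : Fin (∑ i, P i)) : Fin k :=
  (finSigmaFinEquiv.symm j).1

theorem sum_comp_replicateIndex {M : Type*} [AddCommMonoid M] {k : ℕ} (P : Fin k → ℕ)
    (g : Fin k → M) : ∑ j, g (replicateIndex P j) = ∑ i, P i • g i := by
  rw [← finSigmaFinEquiv.sum_comp]
  simp [replicateIndex, Fintype.sum_sigma]

theorem card_filter_replicateIndex {k : ℕ} (P : Fin k → ℕ) (p : Fin k → Prop) [DecidablePred p] :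
    #{j | p (replicateIndex P j)} = ∑ i with p i, P i := by
  rw [card_filter, sum_comp_replicateIndex P fun i => if p i then 1 else 0, sum_filter]
  simp

theorem dotProduct_ite_sub_ite {R ι : Type*} [CommRing R] [Fintype ι] (v : ι → R)
    (p p' : ι → Prop) [DecidablePred p] [DecidablePred p'] :
    v ⬝ᵥ (fun i => (if p i then 1 else 0) - if p' i then 1 else 0) =
      ∑ i with p i, v i - ∑ i with p' i, v i := by
  simp [dotProduct, mul_sub, sum_filter, sum_sub_distrib]

theorem combination_of_uniform_cover_inequalities_general {n k : ℕ} (hn : 0 < n)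
    (α : ℝ) (β : Fin k → ℝ) (hβ : ∀ i, 0 < β i)
    (Y : Fin k → Finset (Fin n)) (hY : ∀ i, (Y i).Nonempty)
    (hbal : ∀ s : Fin n, ∑ i ∈ Finset.univ.filter (fun i => s ∈ Y i), β i = α) :
    ∃ (N : ℕ) (c : Fin N → ℝ) (_ : ∀ t, 0 ≤ c t) (m : Fin N → ℕ) (r : Fin N → ℕ)
      (Z : (t : Fin N) → Fin (r t) → Finset (Fin n)) (hZ : ∀ t j, (Z t j).Nonempty),
      (∀ t, ∀ s : Fin n, (Finset.univ.filter fun j => s ∈ Z t j).card = m t) ∧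
      ∀ x : {A : Finset (Fin n) // A.Nonempty} → ℝ,
        (∑ i, β i * x ⟨Y i, hY i⟩) -
            α * x ⟨Finset.univ, ⟨⟨0, hn⟩, Finset.mem_univ _⟩⟩ =
          ∑ t, c t * ((∑ j, x ⟨Z t j, hZ t j⟩) -
            (m t : ℝ) * x ⟨Finset.univ, ⟨⟨0, hn⟩, Finset.mem_univ _⟩⟩) := by
  obtain ⟨N, c, P, hc, hβP, hrel⟩ := exists_nat_decomposition_of_pos hβ
  let m t := ∑ i with ⟨0, hn⟩ ∈ Y i, P t i
  have hcover : ∀ t s, ∑ i with s ∈ Y i, P t i = m t := by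
    intro t s
    have h := hrel (fun i => (if s ∈ Y i then 1 else 0) - if ⟨0, hn⟩ ∈ Y i then 1 else 0)
      (by simp only [Rat.cast_sub, apply_ite ((↑) : ℚ → ℝ), Rat.cast_one, Rat.cast_zero]
          rw [dotProduct_ite_sub_ite, hbal, hbal, sub_self]) t
    rw [dotProduct_ite_sub_ite, sub_eq_zero] at h
    exact_mod_cast h
  have hβ_eq : ∀ i, β i = ∑ t, c t * P t i := fun i => by simp [hβP, Finset.sum_apply]
  have hα_eq : α = ∑ t, c t * m t := by
    simp only [← hbal ⟨0, hn⟩, hβ_eq, m, Nat.cast_sum, mul_sum]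
    exact sum_comm
  refine ⟨N, c, hc, m, fun t => ∑ i, P t i, fun t j => Y (replicateIndex (P t) j),
    fun _ _ => hY _, fun t s => (card_filter_replicateIndex _ _).trans (hcover t s), fun x => ?_⟩
  simp only [sum_comp_replicateIndex (P _) fun i => x ⟨Y i, hY i⟩, hβ_eq, hα_eq, mul_sub,
    sum_sub_distrib, sum_mul, mul_sum, nsmul_eq_mul, mul_assoc]
  rw [sum_comm]

/-- Lemma 5: if `α, β₁,…,β_k > 0`, `Y₁,…,Y_k ⊆ [n]`, and for every `s ∈ [n]`
the sum of the `β_i` with `s ∈ Y_i` equals `α`, then the inequality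
`Σ β_i x_{Y_i} ≥ α x_{[n]}` is a nonnegative linear combination of log-form
uniform cover inequalities `Σ_j x_{Z_j} ≥ m x_{[n]}`. -/
theorem combination_of_uniform_cover_inequalities {n k : ℕ} (hn : 0 < n)
    (α : ℝ) (hα : 0 < α) (β : Fin k → ℝ) (hβ : ∀ i, 0 < β i)
    (Y : Fin k → Finset (Fin n)) (hY : ∀ i, (Y i).Nonempty)
    (hbal : ∀ s : Fin n, ∑ i ∈ Finset.univ.filter (fun i => s ∈ Y i), β i = α) :
    ∃ (N : ℕ) (c : Fin N → ℝ) (_ : ∀ t, 0 ≤ c t) (m : Fin N → ℕ) (r : Fin N → ℕ)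
      (Z : (t : Fin N) → Fin (r t) → Finset (Fin n)) (hZ : ∀ t j, (Z t j).Nonempty),
      (∀ t, ∀ s : Fin n, (Finset.univ.filter fun j => s ∈ Z t j).card = m t) ∧
      ∀ x : {A : Finset (Fin n) // A.Nonempty} → ℝ,
        (∑ i, β i * x ⟨Y i, hY i⟩) -
            α * x ⟨Finset.univ, ⟨⟨0, hn⟩, Finset.mem_univ _⟩⟩ =
          ∑ t, c t * ((∑ j, x ⟨Z t j, hZ t j⟩) -
            (m t : ℝ) * x ⟨Finset.univ, ⟨⟨0, hn⟩, Finset.mem_univ _⟩⟩) :=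
  combination_of_uniform_cover_inequalities_general hn α β hβ Y hY hbal
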